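/- If G is a dead right end, then G is equivalent, modulo the closure of dead ends, to the canonical-form integer game n where n = l(G) is the left-length of G; symmetrically a dead left end is equivalent to -r(G). -/

import Mathlib

universe u

namespace SetTheory

/-- Pre-games, as formerly defined in Mathlib (`Mathlib.SetTheory.Game.PGame`). -/
inductive PGame : Type (u + 1)
  | mk : ∀ α β : Type u, (α → PGame) → (β → PGame) → PGame

namespace PGame

def LeftMoves : PGame → Type u
  | mk l _ _ _ => l

def RightMoves : PGame → Type u
  | mk _ r _ _ => r

def moveLeft : ∀ g : PGame, LeftMoves g → PGame
  | mk _l _ L _ => L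

def moveRight : ∀ g : PGame, RightMoves g → PGame
  | mk _ _r _ R => R

inductive IsOption : PGame → PGame → Prop
  | moveLeft {x : PGame} (i : x.LeftMoves) : IsOption (x.moveLeft i) x
  | moveRight {x : PGame} (i : x.RightMoves) : IsOption (x.moveRight i) x

instance : Zero PGame :=
  ⟨⟨PEmpty, PEmpty, PEmpty.elim, PEmpty.elim⟩⟩

def neg : PGame → PGame
  | ⟨l, r, L, R⟩ => ⟨r, l, fun i => neg (R i), fun i => neg (L i)⟩

instance : Neg PGame :=
  ⟨neg⟩

noncomputable instance : Add PGame.{u} :=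
  ⟨fun x y => by
    induction x generalizing y with | mk xl xr _ _ IHxl IHxr => _
    induction y with | mk yl yr yL yR IHyl IHyr => _
    have y := mk yl yr yL yR
    refine ⟨xl ⊕ yl, xr ⊕ yr, Sum.rec ?_ ?_, Sum.rec ?_ ?_⟩
    · exact fun i => IHxl i y
    · exact IHyl
    · exact fun i => IHxr i y
    · exact IHyr⟩

end PGame

end SetTheory

open SetTheory

namespace Misere

/-- `F` is a follower of `G`: reachable from `G` by a (possibly empty) sequence of moves. -/
def Follower (F G : PGame) : Prop := Relation.ReflTransGen PGame.IsOption F G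

def IsLeftEnd (G : PGame) : Prop := IsEmpty G.LeftMoves
def IsRightEnd (G : PGame) : Prop := IsEmpty G.RightMoves

/-- A dead left end: every follower (including itself) is a left end. -/
def DeadLeftEnd (G : PGame) : Prop := ∀ F, Follower F G → IsLeftEnd F
def DeadRightEnd (G : PGame) : Prop := ∀ F, Follower F G → IsRightEnd F
def DeadEnd (G : PGame) : Prop := DeadLeftEnd G ∨ DeadRightEnd G

/-- A game is dead-ending if every end follower is a dead end. -/
def DeadEnding (G : PGame) : Prop :=
  ∀ F, Follower F G → (IsLeftEnd F → DeadLeftEnd F) ∧ (IsRightEnd F → DeadRightEnd F)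

/-- The universe of dead-ending games. -/
def E : Set PGame := {G | DeadEnding G}

/-- `(misereWins G).1` : Left, moving first, wins `G` under misère play;
    `(misereWins G).2` : Right, moving first, wins `G` under misère play. -/
def misereWins : PGame → Prop × Prop
  | PGame.mk l r L R =>
      (IsEmpty l ∨ ∃ i, ¬ (misereWins (L i)).2,
       IsEmpty r ∨ ∃ j, ¬ (misereWins (R j)).1)

def LeftWinsGF (G : PGame) : Prop := (misereWins G).1
def RightWinsGF (G : PGame) : Prop := (misereWins G).2

inductive MOutcome : Type
  | L | N | P | R
deriving DecidableEq

/-- Partial order on misère outcomes: `R` minimal, `L` maximal, `N` and `P` incomparable. -/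
def MOutcome.le : MOutcome → MOutcome → Prop
  | .R, _ => True
  | _, .L => True
  | a, b => a = b

instance : LE MOutcome := ⟨MOutcome.le⟩

/-- The misère outcome of a game. -/
noncomputable def outcome (G : PGame) : MOutcome := by
  classical
  exact if LeftWinsGF G then (if RightWinsGF G then .N else .L)
        else (if RightWinsGF G then .R else .P)

/-- `G ≡ H (mod U)`. -/
def equivMod (U : Set PGame) (G H : PGame) : Prop :=
  ∀ X ∈ U, outcome (G + X) = outcome (H + X)

/-- `G ≧ H (mod U)`. -/
def geMod (U : Set PGame) (G H : PGame) : Prop :=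
  ∀ X ∈ U, outcome (H + X) ≤ outcome (G + X)

/-- `LeftChain G n`: there is a sequence of `n` consecutive Left moves from `G`
ending at the zero position. -/
inductive LeftChain : PGame → ℕ → Prop
  | zero (G : PGame) : IsLeftEnd G → IsRightEnd G → LeftChain G 0
  | succ (G : PGame) (i : G.LeftMoves) (n : ℕ) :
      LeftChain (G.moveLeft i) n → LeftChain G (n + 1)

inductive RightChain : PGame → ℕ → Prop
  | zero (G : PGame) : IsLeftEnd G → IsRightEnd G → RightChain G 0
  | succ (G : PGame) (j : G.RightMoves) (n : ℕ) :
      RightChain (G.moveRight j) n → RightChain G (n + 1)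

/-- Left-length: minimum number of consecutive Left moves needed to reach zero. -/
noncomputable def leftLength (G : PGame) : ℕ := sInf {n | LeftChain G n}

/-- Right-length: minimum number of consecutive Right moves needed to reach zero. -/
noncomputable def rightLength (G : PGame) : ℕ := sInf {n | RightChain G n}

/-- Normal-play canonical form of a nonnegative integer. -/
def natGame : ℕ → PGame
  | 0 => 0
  | n + 1 => PGame.mk PUnit PEmpty (fun _ => natGame n) PEmpty.elim

/-- Normal-play canonical form of an integer (negatives are conjugates). -/
def intGame (n : ℤ) : PGame :=
  if 0 ≤ n then natGame n.toNat else -natGame (-n).toNat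

/-- Normal-play canonical form of the dyadic rational `m / 2 ^ j`. -/
def dyadicGame : ℤ → ℕ → PGame
  | m, 0 => intGame m
  | m, j + 1 =>
      if m % 2 = 0 then dyadicGame (m / 2) j
      else PGame.mk PUnit PUnit (fun _ => dyadicGame ((m - 1) / 2) j)
            (fun _ => dyadicGame ((m + 1) / 2) j)

/-- The closure of dead ends: finite disjunctive sums of dead ends. -/
def DeadEndClosure : Set PGame :=
  {G | ∃ l : List PGame, (∀ x ∈ l, DeadEnd x) ∧ G = l.sum}

end Misere

open Misere SetTheory PGame

/-!
In misère play a player with no move wins. Let `minLeftRun G` be the least number of consecutive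
Left moves after which Left has no move, and `minRightRun G` the same for Right. In a dead end no
move of one player changes the other player's run, and since runs add up over disjunctive sums
the same holds in every sum of dead ends. In such a game misère play is a race: Left, moving
first, wins iff `minLeftRun G ≤ minRightRun G`. Hence the outcome of `G + X` only depends on the
two runs of `G`, and a dead right end `G` has the runs `(l(G), 0)` of the integer `l(G)`.
-/

namespace SetTheory.PGame

@[elab_as_elim]
noncomputable def moveRecOn {C : PGame → Sort*} (x : PGame)
    (IH : ∀ y : PGame, (∀ i, C (y.moveLeft i)) → (∀ j, C (y.moveRight j)) → C y) : C x :=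
  x.recOn fun yl yr yL yR _ _ => IH (mk yl yr yL yR) (by assumption) (by assumption)

theorem neg_zero : -(0 : PGame) = 0 := by
  show mk PEmpty PEmpty _ _ = mk PEmpty PEmpty _ _
  congr <;> funext i <;> exact i.elim

section Add

variable {x y : PGame}

theorem isEmpty_leftMoves_add :
    IsEmpty (x + y).LeftMoves ↔ IsEmpty x.LeftMoves ∧ IsEmpty y.LeftMoves := by
  cases x; cases y; exact isEmpty_sum

theorem isEmpty_rightMoves_add :
    IsEmpty (x + y).RightMoves ↔ IsEmpty x.RightMoves ∧ IsEmpty y.RightMoves := by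
  cases x; cases y; exact isEmpty_sum

theorem exists_moveLeft_add_left (y : PGame) (i : x.LeftMoves) :
    ∃ k, (x + y).moveLeft k = x.moveLeft i + y := by
  cases x; cases y; exact ⟨Sum.inl i, rfl⟩

theorem exists_moveLeft_add_right (x : PGame) (j : y.LeftMoves) :
    ∃ k, (x + y).moveLeft k = x + y.moveLeft j := by
  cases x; cases y; exact ⟨Sum.inr j, rfl⟩

theorem exists_moveRight_add_left (y : PGame) (i : x.RightMoves) :
    ∃ k, (x + y).moveRight k = x.moveRight i + y := by
  cases x; cases y; exact ⟨Sum.inl i, rfl⟩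

theorem exists_moveRight_add_right (x : PGame) (j : y.RightMoves) :
    ∃ k, (x + y).moveRight k = x + y.moveRight j := by
  cases x; cases y; exact ⟨Sum.inr j, rfl⟩

theorem moveLeft_add_cases (k : (x + y).LeftMoves) :
    (∃ i, (x + y).moveLeft k = x.moveLeft i + y) ∨ ∃ j, (x + y).moveLeft k = x + y.moveLeft j := by
  cases x; cases y
  rcases k with i | j
  exacts [Or.inl ⟨i, rfl⟩, Or.inr ⟨j, rfl⟩]

theorem moveRight_add_cases (k : (x + y).RightMoves) :
    (∃ i, (x + y).moveRight k = x.moveRight i + y) ∨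
      ∃ j, (x + y).moveRight k = x + y.moveRight j := by
  cases x; cases y
  rcases k with i | j
  exacts [Or.inl ⟨i, rfl⟩, Or.inr ⟨j, rfl⟩]

theorem isOption_add {F : PGame} (h : IsOption F (x + y)) :
    (∃ x', IsOption x' x ∧ F = x' + y) ∨ ∃ y', IsOption y' y ∧ F = x + y' := by
  cases h with
  | moveLeft k =>
    rcases moveLeft_add_cases k with ⟨i, h⟩ | ⟨j, h⟩
    exacts [Or.inl ⟨_, .moveLeft i, h⟩, Or.inr ⟨_, .moveLeft j, h⟩]
  | moveRight k =>
    rcases moveRight_add_cases k with ⟨i, h⟩ | ⟨j, h⟩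
    exacts [Or.inl ⟨_, .moveRight i, h⟩, Or.inr ⟨_, .moveRight j, h⟩]

end Add

end SetTheory.PGame

namespace Misere

variable {F G H X x y : PGame}

theorem follower_add (h : Follower F (x + y)) :
    ∃ x' y', Follower x' x ∧ Follower y' y ∧ F = x' + y' := by
  induction h using Relation.ReflTransGen.head_induction_on with
  | refl => exact ⟨x, y, .refl, .refl, rfl⟩
  | head hF _ ih =>
    obtain ⟨x', y', hx', hy', rfl⟩ := ih
    rcases isOption_add hF with ⟨x'', hx'', rfl⟩ | ⟨y'', hy'', rfl⟩
    exacts [⟨x'', y', .head hx'' hx', hy', rfl⟩, ⟨x', y'', hx', .head hy'' hy', rfl⟩]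

theorem DeadLeftEnd.isLeftEnd (hG : DeadLeftEnd G) : IsLeftEnd G := hG G .refl

theorem DeadRightEnd.isRightEnd (hG : DeadRightEnd G) : IsRightEnd G := hG G .refl

theorem DeadLeftEnd.of_follower (hG : DeadLeftEnd G) (hF : Follower F G) : DeadLeftEnd F :=
  fun F' hF' => hG F' (hF'.trans hF)

theorem DeadRightEnd.of_follower (hG : DeadRightEnd G) (hF : Follower F G) : DeadRightEnd F :=
  fun F' hF' => hG F' (hF'.trans hF)

theorem deadLeftEnd_of_moveRight (hG : IsLeftEnd G) (h : ∀ j, DeadLeftEnd (G.moveRight j)) :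
    DeadLeftEnd G := by
  intro F hF
  rcases hF.cases_tail with rfl | ⟨H, hFH, hHG⟩
  · exact hG
  · cases hHG with
    | moveLeft i => exact (hG.false i).elim
    | moveRight j => exact h j F hFH

theorem deadRightEnd_of_moveLeft (hG : IsRightEnd G) (h : ∀ i, DeadRightEnd (G.moveLeft i)) :
    DeadRightEnd G := by
  intro F hF
  rcases hF.cases_tail with rfl | ⟨H, hFH, hHG⟩
  · exact hG
  · cases hHG with
    | moveLeft i => exact h i F hFH
    | moveRight j => exact (hG.false j).elim

open Classical in
noncomputable def minLeftRun : PGame → ℕ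
  | mk l _ L _ => if IsEmpty l then 0 else sInf (Set.range fun i => minLeftRun (L i)) + 1

open Classical in
noncomputable def minRightRun : PGame → ℕ
  | mk _ r _ R => if IsEmpty r then 0 else sInf (Set.range fun j => minRightRun (R j)) + 1

theorem minLeftRun_of_isLeftEnd (h : IsLeftEnd G) : minLeftRun G = 0 := by
  cases G with
  | mk l r L R => exact if_pos h

theorem minRightRun_of_isRightEnd (h : IsRightEnd G) : minRightRun G = 0 := by
  cases G with
  | mk l r L R => exact if_pos h

theorem minLeftRun_of_not_isLeftEnd (h : ¬IsLeftEnd G) :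
    minLeftRun G = sInf (Set.range fun i => minLeftRun (G.moveLeft i)) + 1 := by
  cases G with
  | mk l r L R => exact if_neg h

theorem minRightRun_of_not_isRightEnd (h : ¬IsRightEnd G) :
    minRightRun G = sInf (Set.range fun j => minRightRun (G.moveRight j)) + 1 := by
  cases G with
  | mk l r L R => exact if_neg h

theorem minLeftRun_le_moveLeft (i : G.LeftMoves) : minLeftRun G ≤ minLeftRun (G.moveLeft i) + 1 := by
  rw [minLeftRun_of_not_isLeftEnd fun h => h.false i]
  exact Nat.add_le_add_right (Nat.sInf_le (Set.mem_range_self i)) 1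

theorem minRightRun_le_moveRight (j : G.RightMoves) :
    minRightRun G ≤ minRightRun (G.moveRight j) + 1 := by
  rw [minRightRun_of_not_isRightEnd fun h => h.false j]
  exact Nat.add_le_add_right (Nat.sInf_le (Set.mem_range_self j)) 1

theorem exists_minLeftRun_moveLeft (h : ¬IsLeftEnd G) :
    ∃ i, minLeftRun (G.moveLeft i) + 1 = minLeftRun G := by
  have : Nonempty G.LeftMoves := not_isEmpty_iff.mp h
  obtain ⟨i, hi⟩ := Nat.sInf_mem (Set.range_nonempty fun i => minLeftRun (G.moveLeft i))
  exact ⟨i, by rw [minLeftRun_of_not_isLeftEnd h]; exact congrArg (· + 1) hi⟩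

theorem exists_minRightRun_moveRight (h : ¬IsRightEnd G) :
    ∃ j, minRightRun (G.moveRight j) + 1 = minRightRun G := by
  have : Nonempty G.RightMoves := not_isEmpty_iff.mp h
  obtain ⟨j, hj⟩ := Nat.sInf_mem (Set.range_nonempty fun j => minRightRun (G.moveRight j))
  exact ⟨j, by rw [minRightRun_of_not_isRightEnd h]; exact congrArg (· + 1) hj⟩

theorem minLeftRun_le_iff {n : ℕ} :
    minLeftRun G ≤ n ↔ IsLeftEnd G ∨ ∃ i, minLeftRun (G.moveLeft i) < n := by
  by_cases h : IsLeftEnd G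
  · simp only [h, minLeftRun_of_isLeftEnd h, zero_le, true_or]
  · obtain ⟨i, hi⟩ := exists_minLeftRun_moveLeft h
    refine ⟨fun hn => Or.inr ⟨i, by omega⟩, ?_⟩
    rintro (h' | ⟨i', hi'⟩)
    · exact (h h').elim
    · have := minLeftRun_le_moveLeft i'
      omega

theorem minRightRun_le_iff {n : ℕ} :
    minRightRun G ≤ n ↔ IsRightEnd G ∨ ∃ j, minRightRun (G.moveRight j) < n := by
  by_cases h : IsRightEnd G
  · simp only [h, minRightRun_of_isRightEnd h, zero_le, true_or]
  · obtain ⟨j, hj⟩ := exists_minRightRun_moveRight h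
    refine ⟨fun hn => Or.inr ⟨j, by omega⟩, ?_⟩
    rintro (h' | ⟨j', hj'⟩)
    · exact (h h').elim
    · have := minRightRun_le_moveRight j'
      omega

theorem minLeftRun_add (x y : PGame) : minLeftRun (x + y) = minLeftRun x + minLeftRun y := by
  induction x using moveRecOn generalizing y with | IH x ihx _ =>
  induction y using moveRecOn with | IH y ihy _ =>
  apply le_antisymm
  · rw [minLeftRun_le_iff]
    by_cases hx : IsLeftEnd x
    · by_cases hy : IsLeftEnd y
      · exact Or.inl (isEmpty_leftMoves_add.2 ⟨hx, hy⟩)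
      · obtain ⟨j, hj⟩ := exists_minLeftRun_moveLeft hy
        obtain ⟨k, hk⟩ := exists_moveLeft_add_right x j
        exact Or.inr ⟨k, by rw [hk, ihy]; omega⟩
    · obtain ⟨i, hi⟩ := exists_minLeftRun_moveLeft hx
      obtain ⟨k, hk⟩ := exists_moveLeft_add_left y i
      exact Or.inr ⟨k, by rw [hk, ihx]; omega⟩
  · by_cases h : IsLeftEnd (x + y)
    · obtain ⟨hx, hy⟩ := isEmpty_leftMoves_add.1 h
      rw [minLeftRun_of_isLeftEnd hx, minLeftRun_of_isLeftEnd hy]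
      exact Nat.zero_le _
    · obtain ⟨k, hk⟩ := exists_minLeftRun_moveLeft h
      rw [← hk]
      rcases moveLeft_add_cases k with ⟨i, hi⟩ | ⟨j, hj⟩
      · rw [hi, ihx]; have := minLeftRun_le_moveLeft i; omega
      · rw [hj, ihy]; have := minLeftRun_le_moveLeft j; omega

theorem minRightRun_add (x y : PGame) : minRightRun (x + y) = minRightRun x + minRightRun y := by
  induction x using moveRecOn generalizing y with | IH x _ ihx =>
  induction y using moveRecOn with | IH y _ ihy =>
  apply le_antisymm
  · rw [minRightRun_le_iff]
    by_cases hx : IsRightEnd x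
    · by_cases hy : IsRightEnd y
      · exact Or.inl (isEmpty_rightMoves_add.2 ⟨hx, hy⟩)
      · obtain ⟨j, hj⟩ := exists_minRightRun_moveRight hy
        obtain ⟨k, hk⟩ := exists_moveRight_add_right x j
        exact Or.inr ⟨k, by rw [hk, ihy]; omega⟩
    · obtain ⟨i, hi⟩ := exists_minRightRun_moveRight hx
      obtain ⟨k, hk⟩ := exists_moveRight_add_left y i
      exact Or.inr ⟨k, by rw [hk, ihx]; omega⟩
  · by_cases h : IsRightEnd (x + y)
    · obtain ⟨hx, hy⟩ := isEmpty_rightMoves_add.1 h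
      rw [minRightRun_of_isRightEnd hx, minRightRun_of_isRightEnd hy]
      exact Nat.zero_le _
    · obtain ⟨k, hk⟩ := exists_minRightRun_moveRight h
      rw [← hk]
      rcases moveRight_add_cases k with ⟨i, hi⟩ | ⟨j, hj⟩
      · rw [hi, ihx]; have := minRightRun_le_moveRight i; omega
      · rw [hj, ihy]; have := minRightRun_le_moveRight j; omega

def RunInvariant (G : PGame) : Prop :=
  ∀ F, Follower F G →
    (∀ i, minRightRun (F.moveLeft i) = minRightRun F) ∧
      ∀ j, minLeftRun (F.moveRight j) = minLeftRun F

theorem RunInvariant.of_follower (hG : RunInvariant G) (hF : Follower F G) : RunInvariant F :=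
  fun F' hF' => hG F' (hF'.trans hF)

theorem RunInvariant.add (hx : RunInvariant x) (hy : RunInvariant y) : RunInvariant (x + y) := by
  intro F hF
  obtain ⟨x', y', hx', hy', rfl⟩ := follower_add hF
  obtain ⟨hxL, hxR⟩ := hx x' hx'
  obtain ⟨hyL, hyR⟩ := hy y' hy'
  constructor
  · intro k
    rcases moveLeft_add_cases k with ⟨i, h⟩ | ⟨j, h⟩ <;>
      simp only [h, minRightRun_add, hxL, hyL]
  · intro k
    rcases moveRight_add_cases k with ⟨i, h⟩ | ⟨j, h⟩ <;>
      simp only [h, minLeftRun_add, hxR, hyR]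

theorem DeadLeftEnd.runInvariant (hG : DeadLeftEnd G) : RunInvariant G := by
  intro F hF
  have hF' := hG.of_follower hF
  refine ⟨fun i => (hF'.isLeftEnd.false i).elim, fun j => ?_⟩
  rw [minLeftRun_of_isLeftEnd hF'.isLeftEnd,
    minLeftRun_of_isLeftEnd (hF'.of_follower (.single (.moveRight j))).isLeftEnd]

theorem DeadRightEnd.runInvariant (hG : DeadRightEnd G) : RunInvariant G := by
  intro F hF
  have hF' := hG.of_follower hF
  refine ⟨fun i => ?_, fun j => (hF'.isRightEnd.false j).elim⟩
  rw [minRightRun_of_isRightEnd hF'.isRightEnd,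
    minRightRun_of_isRightEnd (hF'.of_follower (.single (.moveLeft i))).isRightEnd]

theorem DeadEnd.runInvariant : DeadEnd G → RunInvariant G
  | .inl h => h.runInvariant
  | .inr h => h.runInvariant

theorem leftWinsGF_iff : LeftWinsGF G ↔ IsLeftEnd G ∨ ∃ i, ¬RightWinsGF (G.moveLeft i) := by
  cases G; exact Iff.rfl

theorem rightWinsGF_iff : RightWinsGF G ↔ IsRightEnd G ∨ ∃ j, ¬LeftWinsGF (G.moveRight j) := by
  cases G; exact Iff.rfl

theorem RunInvariant.winsGF_iff (hG : RunInvariant G) :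
    (LeftWinsGF G ↔ minLeftRun G ≤ minRightRun G) ∧
      (RightWinsGF G ↔ minRightRun G ≤ minLeftRun G) := by
  induction G using moveRecOn with | IH G ihL ihR =>
  obtain ⟨hL, hR⟩ := hG G .refl
  have ihL' i := (ihL i (hG.of_follower (.single (.moveLeft i)))).2
  have ihR' j := (ihR j (hG.of_follower (.single (.moveRight j)))).1
  constructor
  · rw [leftWinsGF_iff, minLeftRun_le_iff]
    simp only [ihL', hL, not_le]
  · rw [rightWinsGF_iff, minRightRun_le_iff]
    simp only [ihR', hR, not_le]

theorem RunInvariant.outcome_eq (hG : RunInvariant G) (hH : RunInvariant H)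
    (hl : minLeftRun G = minLeftRun H) (hr : minRightRun G = minRightRun H) :
    outcome G = outcome H := by
  simp only [outcome, propext hG.winsGF_iff.1, propext hG.winsGF_iff.2,
    propext hH.winsGF_iff.1, propext hH.winsGF_iff.2, hl, hr]

theorem equivMod_of_minRun_eq {U : Set PGame} (hU : ∀ X ∈ U, RunInvariant X)
    (hG : RunInvariant G) (hH : RunInvariant H)
    (hl : minLeftRun G = minLeftRun H) (hr : minRightRun G = minRightRun H) :
    equivMod U G H := fun X hX =>
  (hG.add (hU X hX)).outcome_eq (hH.add (hU X hX))
    (by rw [minLeftRun_add, minLeftRun_add, hl]) (by rw [minRightRun_add, minRightRun_add, hr])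

theorem deadRightEnd_natGame : ∀ n, DeadRightEnd (natGame n)
  | 0 => deadRightEnd_of_moveLeft (inferInstanceAs (IsEmpty PEmpty)) fun i => i.elim
  | n + 1 => deadRightEnd_of_moveLeft (inferInstanceAs (IsEmpty PEmpty)) fun _ =>
      deadRightEnd_natGame n

theorem deadLeftEnd_neg_natGame : ∀ n, DeadLeftEnd (-natGame n)
  | 0 => deadLeftEnd_of_moveRight (inferInstanceAs (IsEmpty PEmpty)) fun j => j.elim
  | n + 1 => deadLeftEnd_of_moveRight (inferInstanceAs (IsEmpty PEmpty)) fun _ =>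
      deadLeftEnd_neg_natGame n

theorem runInvariant_of_mem_deadEndClosure (hX : X ∈ DeadEndClosure) : RunInvariant X := by
  obtain ⟨l, hl, rfl⟩ := hX
  induction l with
  | nil => exact (deadRightEnd_natGame 0).runInvariant
  | cons a l ih =>
    rw [List.sum_cons]
    exact (hl a List.mem_cons_self).runInvariant.add (ih fun x hx => hl x (.tail a hx))

theorem minLeftRun_natGame : ∀ n, minLeftRun (natGame n) = n
  | 0 => minLeftRun_of_isLeftEnd (inferInstanceAs (IsEmpty PEmpty))
  | n + 1 => by
    obtain ⟨i, hi⟩ :=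
      exists_minLeftRun_moveLeft (G := natGame (n + 1)) (not_isEmpty_of_nonempty PUnit)
    exact hi.symm.trans (congrArg (· + 1) (minLeftRun_natGame n))

theorem minRightRun_neg_natGame : ∀ n, minRightRun (-natGame n) = n
  | 0 => minRightRun_of_isRightEnd (inferInstanceAs (IsEmpty PEmpty))
  | n + 1 => by
    obtain ⟨j, hj⟩ :=
      exists_minRightRun_moveRight (G := -natGame (n + 1)) (not_isEmpty_of_nonempty PUnit)
    exact hj.symm.trans (congrArg (· + 1) (minRightRun_neg_natGame n))

theorem intGame_natCast (n : ℕ) : intGame n = natGame n := by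
  rw [intGame, if_pos (Int.natCast_nonneg n), Int.toNat_natCast]

theorem intGame_neg_natCast (n : ℕ) : intGame (-n) = -natGame n := by
  rcases n.eq_zero_or_pos with rfl | hn
  · exact PGame.neg_zero.symm
  · rw [intGame, if_neg (by omega), neg_neg, Int.toNat_natCast]

theorem minLeftRun_le_of_leftChain {n : ℕ} (h : LeftChain G n) : minLeftRun G ≤ n := by
  induction h with
  | zero G hl _ => rw [minLeftRun_of_isLeftEnd hl]
  | succ G i n _ ih => exact (minLeftRun_le_moveLeft i).trans (by omega)

theorem minRightRun_le_of_rightChain {n : ℕ} (h : RightChain G n) : minRightRun G ≤ n := by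
  induction h with
  | zero G _ hr => rw [minRightRun_of_isRightEnd hr]
  | succ G j n _ ih => exact (minRightRun_le_moveRight j).trans (by omega)

theorem DeadRightEnd.leftChain_minLeftRun (hG : DeadRightEnd G) : LeftChain G (minLeftRun G) := by
  induction G using moveRecOn with | IH G ihL _ =>
  by_cases h : IsLeftEnd G
  · rw [minLeftRun_of_isLeftEnd h]
    exact .zero G h hG.isRightEnd
  · obtain ⟨i, hi⟩ := exists_minLeftRun_moveLeft h
    rw [← hi]
    exact .succ G i _ (ihL i (hG.of_follower (.single (.moveLeft i))))

theorem DeadLeftEnd.rightChain_minRightRun (hG : DeadLeftEnd G) :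
    RightChain G (minRightRun G) := by
  induction G using moveRecOn with | IH G _ ihR =>
  by_cases h : IsRightEnd G
  · rw [minRightRun_of_isRightEnd h]
    exact .zero G hG.isLeftEnd h
  · obtain ⟨j, hj⟩ := exists_minRightRun_moveRight h
    rw [← hj]
    exact .succ G j _ (ihR j (hG.of_follower (.single (.moveRight j))))

theorem DeadRightEnd.leftLength_eq (hG : DeadRightEnd G) : leftLength G = minLeftRun G :=
  IsLeast.csInf_eq ⟨hG.leftChain_minLeftRun, fun _ => minLeftRun_le_of_leftChain⟩

theorem DeadLeftEnd.rightLength_eq (hG : DeadLeftEnd G) : rightLength G = minRightRun G :=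
  IsLeast.csInf_eq ⟨hG.rightChain_minRightRun, fun _ => minRightRun_le_of_rightChain⟩
end Misere

/-- modulo the closure of dead ends, every dead end is equivalent to an integer. -/
theorem stmt9 (G : PGame) :
    (DeadRightEnd G → equivMod DeadEndClosure G (intGame (leftLength G))) ∧
    (DeadLeftEnd G → equivMod DeadEndClosure G (intGame (-(rightLength G : ℤ)))) := by
  constructor
  · intro hG
    rw [intGame_natCast]
    apply equivMod_of_minRun_eq (fun _ => runInvariant_of_mem_deadEndClosure) hG.runInvariant
      (deadRightEnd_natGame _).runInvariant
    · rw [minLeftRun_natGame, hG.leftLength_eq]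
    · rw [minRightRun_of_isRightEnd hG.isRightEnd,
        minRightRun_of_isRightEnd (deadRightEnd_natGame _).isRightEnd]
  · intro hG
    rw [intGame_neg_natCast]
    apply equivMod_of_minRun_eq (fun _ => runInvariant_of_mem_deadEndClosure) hG.runInvariant
      (deadLeftEnd_neg_natGame _).runInvariant
    · rw [minLeftRun_of_isLeftEnd hG.isLeftEnd,
        minLeftRun_of_isLeftEnd (deadLeftEnd_neg_natGame _).isLeftEnd]
    · rw [minRightRun_neg_natGame, hG.rightLength_eq]
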